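/- Let Ω ⊂ ℝ² be a bounded Lipschitz domain, β > 0, and define the bilinear form B((u,p),(ũ,p̃)) = (∇u,∇ũ)_{L²} + β(u,ũ)_{L²} + (p,∇·ũ)_{L²} + (∇·u,p̃)_{L²} on X = [H¹₀(Ω)]² × L²₀(Ω). With the norms ‖u‖²_U = ‖u‖²_{H¹} + β‖u‖²_{L²} and ‖p‖²_P = sup_{0≠w∈[H¹₀]²} (p, ∇·w)²_{L²} / (‖w‖²_{H¹} + β‖w‖²_{L²}), the bilinear form is bounded: |B(x, x̃)| ≤ C ‖x‖_X ‖x̃‖_X for all x, x̃ ∈ X, with C independent of β. -/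

import Mathlib

open MeasureTheory
open scoped RealInnerProductSpace

noncomputable section

abbrev E2 := EuclideanSpace ℝ (Fin 2)

/-- Divergence of a vector field on the plane. -/
def divg (w : E2 → E2) (x : E2) : ℝ :=
  fderiv ℝ w x (EuclideanSpace.single (0 : Fin 2) (1 : ℝ)) 0 +
    fderiv ℝ w x (EuclideanSpace.single (1 : Fin 2) (1 : ℝ)) 1

/-- (Smooth representatives of) the space `[H¹₀(Ω)]²`. -/
def H10 (Ω : Set E2) : Set (E2 → E2) :=
  {w | ContDiff ℝ 1 w ∧ HasCompactSupport w ∧ tsupport w ⊆ Ω}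

/-- `‖w‖²_U = ‖w‖²_{H¹} + β ‖w‖²_{L²}`. -/
def uNormSq (Ω : Set E2) (β : ℝ) (w : E2 → E2) : ℝ :=
  (∫ x in Ω, (‖w x‖ ^ 2 + ‖fderiv ℝ w x‖ ^ 2)) + β * ∫ x in Ω, ‖w x‖ ^ 2

/-- Pointwise inner product `∇u : ∇v` of the gradients of two vector fields. -/
def gradInner (u v : E2 → E2) (x : E2) : ℝ :=
  ⟪fderiv ℝ u x (EuclideanSpace.single (0 : Fin 2) (1 : ℝ)),
      fderiv ℝ v x (EuclideanSpace.single (0 : Fin 2) (1 : ℝ))⟫ +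
    ⟪fderiv ℝ u x (EuclideanSpace.single (1 : Fin 2) (1 : ℝ)),
      fderiv ℝ v x (EuclideanSpace.single (1 : Fin 2) (1 : ℝ))⟫

/-- `‖p‖²_P = sup_{0 ≠ w ∈ [H¹₀]²} (p, ∇·w)² / (‖w‖²_{H¹} + β‖w‖²_{L²})`. -/
def pNormSq (Ω : Set E2) (β : ℝ) (p : E2 → ℝ) : ℝ :=
  sSup {r : ℝ | ∃ w ∈ H10 Ω, w ≠ 0 ∧
    r = (∫ x in Ω, p x * divg w x) ^ 2 / uNormSq Ω β w}

/-- The generalized Stokes bilinear form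
`B((u,p),(ũ,p̃)) = (∇u,∇ũ) + β(u,ũ) + (p,∇·ũ) + (∇·u,p̃)`. -/
def Bform (Ω : Set E2) (β : ℝ) (u : E2 → E2) (p : E2 → ℝ) (v : E2 → E2) (q : E2 → ℝ) : ℝ :=
  (∫ x in Ω, gradInner u v x) + β * (∫ x in Ω, ⟪u x, v x⟫) +
    (∫ x in Ω, p x * divg v x) + ∫ x in Ω, divg u x * q x


/-! Each of the four terms of `B` is bounded by Cauchy–Schwarz in `L²(Ω)`: the gradient and `β`
terms directly by `‖u‖_U ‖ũ‖_U`, the pressure terms by `‖p‖_P ‖ũ‖_U` through the definition of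
`‖p‖_P` as a supremum, which is finite since `(p, ∇·w)² ≤ 4 ‖p‖²_{L²} ‖w‖²_U`. Every factor is at
most `‖x‖_X` or `‖x̃‖_X`, whence `C = 5` for all `Ω` and `β`. -/

section CauchySchwarz

variable {α : Type*} [MeasurableSpace α] {μ : Measure α}

theorem sq_integral_mul_le_integral_sq_mul_integral_sq {f g : α → ℝ}
    (hf : Integrable (fun x => f x ^ 2) μ) (hg : Integrable (fun x => g x ^ 2) μ) :
    (∫ x, f x * g x ∂μ) ^ 2 ≤ (∫ x, f x ^ 2 ∂μ) * ∫ x, g x ^ 2 ∂μ := by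
  by_cases hfg : Integrable (fun x => f x * g x) μ
  · have hquad (t : ℝ) : 0 ≤ (∫ x, f x ^ 2 ∂μ) * (t * t) + (2 * ∫ x, f x * g x ∂μ) * t +
        ∫ x, g x ^ 2 ∂μ :=
      calc 0 ≤ ∫ x, (t * f x + g x) ^ 2 ∂μ := integral_nonneg fun _ => sq_nonneg _
        _ = ∫ x, ((t * t) * f x ^ 2 + (2 * t) * (f x * g x) + g x ^ 2) ∂μ :=
          integral_congr_ae (.of_forall fun x => by ring)
        _ = _ := by
          rw [integral_add (by exact (hf.const_mul _).add (hfg.const_mul _)) hg,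
            integral_add (hf.const_mul _) (hfg.const_mul _), integral_const_mul,
            integral_const_mul]
          ring
    have hdisc := discrim_le_zero hquad
    unfold discrim at hdisc
    linarith
  · rw [integral_undef hfg]
    simpa using mul_nonneg (integral_nonneg fun _ => sq_nonneg (f _))
      (integral_nonneg fun _ => sq_nonneg (g _))

theorem abs_integral_mul_le_sqrt_mul_sqrt {f g : α → ℝ}
    (hf : Integrable (fun x => f x ^ 2) μ) (hg : Integrable (fun x => g x ^ 2) μ) :
    |∫ x, f x * g x ∂μ| ≤ √(∫ x, f x ^ 2 ∂μ) * √(∫ x, g x ^ 2 ∂μ) := by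
  rw [← Real.sqrt_mul (integral_nonneg fun _ => sq_nonneg _)]
  exact Real.abs_le_sqrt (sq_integral_mul_le_integral_sq_mul_integral_sq hf hg)

theorem abs_integral_le_of_abs_le_mul {h f g : α → ℝ} {c : ℝ} (hc : 0 ≤ c)
    (hf : Integrable (fun x => f x ^ 2) μ) (hg : Integrable (fun x => g x ^ 2) μ)
    (hfg : Integrable (fun x => f x * g x) μ) (hdom : ∀ x, |h x| ≤ c * (f x * g x)) :
    |∫ x, h x ∂μ| ≤ c * (√(∫ x, f x ^ 2 ∂μ) * √(∫ x, g x ^ 2 ∂μ)) :=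
  calc |∫ x, h x ∂μ| ≤ ∫ x, |h x| ∂μ := abs_integral_le_integral_abs
    _ ≤ ∫ x, c * (f x * g x) ∂μ :=
      integral_mono_of_nonneg (.of_forall fun _ => abs_nonneg _) (hfg.const_mul c)
        (.of_forall hdom)
    _ = c * ∫ x, f x * g x ∂μ := integral_const_mul _ _
    _ ≤ c * (√(∫ x, f x ^ 2 ∂μ) * √(∫ x, g x ^ 2 ∂μ)) :=
      mul_le_mul_of_nonneg_left ((le_abs_self _).trans (abs_integral_mul_le_sqrt_mul_sqrt hf hg)) hc

end CauchySchwarz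

theorem norm_apply_single_one_le {ι F : Type*} [Fintype ι] [DecidableEq ι] [NormedAddCommGroup F]
    [NormedSpace ℝ F] (L : EuclideanSpace ℝ ι →L[ℝ] F) (i : ι) :
    ‖L (EuclideanSpace.single i 1)‖ ≤ ‖L‖ := by
  simpa using L.le_opNorm (EuclideanSpace.single i 1)

theorem abs_divg_le (w : E2 → E2) (x : E2) : |divg w x| ≤ 2 * ‖fderiv ℝ w x‖ := by
  have hcoord (i : Fin 2) : |fderiv ℝ w x (EuclideanSpace.single i 1) i| ≤ ‖fderiv ℝ w x‖ := by
    simpa [Real.norm_eq_abs] using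
      (PiLp.norm_apply_le (fderiv ℝ w x (EuclideanSpace.single i 1)) i).trans
        (norm_apply_single_one_le _ i)
  calc |divg w x| ≤ _ := abs_add_le _ _
    _ ≤ 2 * ‖fderiv ℝ w x‖ := by linarith [hcoord 0, hcoord 1]

theorem abs_gradInner_le (u v : E2 → E2) (x : E2) :
    |gradInner u v x| ≤ 2 * (‖fderiv ℝ u x‖ * ‖fderiv ℝ v x‖) := by
  have hterm (i : Fin 2) : |⟪fderiv ℝ u x (EuclideanSpace.single i 1),
      fderiv ℝ v x (EuclideanSpace.single i 1)⟫| ≤ ‖fderiv ℝ u x‖ * ‖fderiv ℝ v x‖ :=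
    (abs_real_inner_le_norm _ _).trans
      (mul_le_mul (norm_apply_single_one_le _ i) (norm_apply_single_one_le _ i)
        (norm_nonneg _) (norm_nonneg _))
  calc |gradInner u v x| ≤ _ := abs_add_le _ _
    _ ≤ 2 * (‖fderiv ℝ u x‖ * ‖fderiv ℝ v x‖) := by linarith [hterm 0, hterm 1]

section H10

variable {Ω : Set E2} {β : ℝ} {u v w : E2 → E2}

theorem continuous_fderiv_of_mem_H10 (hw : w ∈ H10 Ω) : Continuous (fderiv ℝ w) :=
  hw.1.continuous_fderiv one_ne_zero

theorem continuous_divg_of_mem_H10 (hw : w ∈ H10 Ω) : Continuous (divg w) := by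
  have := continuous_fderiv_of_mem_H10 hw
  unfold divg
  fun_prop

theorem integrableOn_norm_sq_of_mem_H10 (hw : w ∈ H10 Ω) : IntegrableOn (fun x => ‖w x‖ ^ 2) Ω := by
  have hcs : HasCompactSupport fun x => ‖w x‖ ^ 2 :=
    hw.2.1.comp_left (g := fun y : E2 => ‖y‖ ^ 2) (by simp)
  exact ((hw.1.continuous.norm.pow 2).integrable_of_hasCompactSupport hcs).integrableOn

theorem integrableOn_norm_fderiv_sq_of_mem_H10 (hw : w ∈ H10 Ω) :
    IntegrableOn (fun x => ‖fderiv ℝ w x‖ ^ 2) Ω := by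
  have hcs : HasCompactSupport fun x => ‖fderiv ℝ w x‖ ^ 2 :=
    (hw.2.1.fderiv ℝ).comp_left (g := fun L : E2 →L[ℝ] E2 => ‖L‖ ^ 2) (by simp)
  exact (((continuous_fderiv_of_mem_H10 hw).norm.pow 2).integrable_of_hasCompactSupport
    hcs).integrableOn

theorem integrableOn_divg_sq_of_mem_H10 (hw : w ∈ H10 Ω) :
    IntegrableOn (fun x => divg w x ^ 2) Ω := by
  have hcs : HasCompactSupport fun x => divg w x ^ 2 :=
    (hw.2.1.fderiv ℝ).comp_left (g := fun L : E2 →L[ℝ] E2 =>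
      (L (EuclideanSpace.single 0 1) 0 + L (EuclideanSpace.single 1 1) 1) ^ 2) (by simp)
  exact (((continuous_divg_of_mem_H10 hw).pow 2).integrable_of_hasCompactSupport
    hcs).integrableOn

theorem integrableOn_norm_mul_norm_of_mem_H10 (hu : u ∈ H10 Ω) (hv : v ∈ H10 Ω) :
    IntegrableOn (fun x => ‖u x‖ * ‖v x‖) Ω := by
  have hcs : HasCompactSupport fun x => ‖u x‖ * ‖v x‖ := hu.2.1.norm.mul_right
  exact ((hu.1.continuous.norm.mul hv.1.continuous.norm).integrable_of_hasCompactSupport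
    hcs).integrableOn

theorem integrableOn_norm_fderiv_mul_norm_fderiv_of_mem_H10 (hu : u ∈ H10 Ω) (hv : v ∈ H10 Ω) :
    IntegrableOn (fun x => ‖fderiv ℝ u x‖ * ‖fderiv ℝ v x‖) Ω := by
  have hcs : HasCompactSupport fun x => ‖fderiv ℝ u x‖ * ‖fderiv ℝ v x‖ :=
    (hu.2.1.fderiv ℝ).norm.mul_right
  exact (((continuous_fderiv_of_mem_H10 hu).norm.mul
    (continuous_fderiv_of_mem_H10 hv).norm).integrable_of_hasCompactSupport hcs).integrableOn

end H10

section Norms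

variable {Ω : Set E2} {β : ℝ} {v w : E2 → E2} {p : E2 → ℝ}

theorem uNormSq_nonneg (hβ : 0 ≤ β) (w : E2 → E2) : 0 ≤ uNormSq Ω β w :=
  add_nonneg (integral_nonneg fun _ => by positivity)
    (mul_nonneg hβ (integral_nonneg fun _ => by positivity))

theorem integral_norm_sq_le_integral_norm_sq_add (hw : w ∈ H10 Ω) :
    ∫ x in Ω, ‖w x‖ ^ 2 ≤ ∫ x in Ω, (‖w x‖ ^ 2 + ‖fderiv ℝ w x‖ ^ 2) :=
  integral_mono (integrableOn_norm_sq_of_mem_H10 hw)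
    ((integrableOn_norm_sq_of_mem_H10 hw).add (integrableOn_norm_fderiv_sq_of_mem_H10 hw))
    fun _ => le_add_of_nonneg_right (by positivity)

theorem integral_norm_fderiv_sq_le_uNormSq (hβ : 0 ≤ β) (hw : w ∈ H10 Ω) :
    ∫ x in Ω, ‖fderiv ℝ w x‖ ^ 2 ≤ uNormSq Ω β w := by
  have hgrad : ∫ x in Ω, ‖fderiv ℝ w x‖ ^ 2 ≤ ∫ x in Ω, (‖w x‖ ^ 2 + ‖fderiv ℝ w x‖ ^ 2) :=
    integral_mono (integrableOn_norm_fderiv_sq_of_mem_H10 hw)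
      ((integrableOn_norm_sq_of_mem_H10 hw).add (integrableOn_norm_fderiv_sq_of_mem_H10 hw))
      fun _ => le_add_of_nonneg_left (by positivity)
  exact hgrad.trans
    (le_add_of_nonneg_right (mul_nonneg hβ (integral_nonneg fun _ => by positivity)))

theorem mul_integral_norm_sq_le_uNormSq (w : E2 → E2) :
    β * ∫ x in Ω, ‖w x‖ ^ 2 ≤ uNormSq Ω β w :=
  le_add_of_nonneg_left (integral_nonneg fun _ => by positivity)

theorem uNormSq_pos (hβ : 0 ≤ β) (hw : w ∈ H10 Ω) (hne : w ≠ 0) : 0 < uNormSq Ω β w := by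
  have hL2 : 0 < ∫ x in Ω, ‖w x‖ ^ 2 := by
    rw [setIntegral_pos_iff_support_of_nonneg_ae (.of_forall fun _ => by positivity)
      (integrableOn_norm_sq_of_mem_H10 hw)]
    have hsupp : Function.support (fun x => ‖w x‖ ^ 2) = Function.support w := by
      ext x
      simp
    rw [hsupp, Set.inter_eq_self_of_subset_left (subset_closure.trans hw.2.2)]
    exact (isOpen_compl_singleton.preimage hw.1.continuous).measure_pos volume
      (Function.support_nonempty_iff.mpr hne)
  exact (hL2.trans_le (integral_norm_sq_le_integral_norm_sq_add hw)).trans_le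
    (le_add_of_nonneg_right (mul_nonneg hβ hL2.le))

theorem integral_divg_sq_le (hβ : 0 ≤ β) (hw : w ∈ H10 Ω) :
    ∫ x in Ω, divg w x ^ 2 ≤ 4 * uNormSq Ω β w := by
  have hpoint (x : E2) : divg w x ^ 2 ≤ 4 * ‖fderiv ℝ w x‖ ^ 2 := by
    nlinarith [abs_divg_le w x, abs_nonneg (divg w x), sq_abs (divg w x)]
  calc ∫ x in Ω, divg w x ^ 2 ≤ ∫ x in Ω, 4 * ‖fderiv ℝ w x‖ ^ 2 :=
        integral_mono (integrableOn_divg_sq_of_mem_H10 hw)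
          ((integrableOn_norm_fderiv_sq_of_mem_H10 hw).const_mul 4)
          hpoint
    _ = 4 * ∫ x in Ω, ‖fderiv ℝ w x‖ ^ 2 := integral_const_mul _ _
    _ ≤ 4 * uNormSq Ω β w := by gcongr; exact integral_norm_fderiv_sq_le_uNormSq hβ hw

theorem pNormSq_nonneg (hβ : 0 ≤ β) (p : E2 → ℝ) : 0 ≤ pNormSq Ω β p := by
  refine Real.sSup_nonneg ?_
  rintro r ⟨w, -, -, rfl⟩
  exact div_nonneg (sq_nonneg _) (uNormSq_nonneg hβ w)

theorem sq_integral_mul_divg_le (hβ : 0 ≤ β) (hp : IntegrableOn (fun x => p x ^ 2) Ω)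
    (hw : w ∈ H10 Ω) :
    (∫ x in Ω, p x * divg w x) ^ 2 ≤ 4 * (∫ x in Ω, p x ^ 2) * uNormSq Ω β w :=
  calc (∫ x in Ω, p x * divg w x) ^ 2 ≤ (∫ x in Ω, p x ^ 2) * ∫ x in Ω, divg w x ^ 2 :=
        sq_integral_mul_le_integral_sq_mul_integral_sq hp (integrableOn_divg_sq_of_mem_H10 hw)
    _ ≤ (∫ x in Ω, p x ^ 2) * (4 * uNormSq Ω β w) :=
        mul_le_mul_of_nonneg_left (integral_divg_sq_le hβ hw)
          (integral_nonneg fun _ => sq_nonneg _)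
    _ = 4 * (∫ x in Ω, p x ^ 2) * uNormSq Ω β w := by ring

theorem sq_integral_mul_divg_le_pNormSq_mul_uNormSq (hβ : 0 ≤ β)
    (hp : IntegrableOn (fun x => p x ^ 2) Ω) (hv : v ∈ H10 Ω) :
    (∫ x in Ω, p x * divg v x) ^ 2 ≤ pNormSq Ω β p * uNormSq Ω β v := by
  rcases eq_or_ne v 0 with rfl | hne
  · have hdivg : divg (0 : E2 → E2) = 0 := by
      funext x
      simp [divg]
    simpa [hdivg] using mul_nonneg (pNormSq_nonneg hβ p) (uNormSq_nonneg hβ 0)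
  have hbdd : BddAbove {r : ℝ | ∃ w ∈ H10 Ω, w ≠ 0 ∧
      r = (∫ x in Ω, p x * divg w x) ^ 2 / uNormSq Ω β w} := by
    refine ⟨4 * ∫ x in Ω, p x ^ 2, ?_⟩
    rintro r ⟨w, hw, hwne, rfl⟩
    exact (div_le_iff₀ (uNormSq_pos hβ hw hwne)).mpr (sq_integral_mul_divg_le hβ hp hw)
  exact (div_le_iff₀ (uNormSq_pos hβ hv hne)).mp (le_csSup hbdd ⟨v, hv, hne, rfl⟩)

end Norms

section TermBounds

variable {Ω : Set E2} {β : ℝ} {u v : E2 → E2}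

theorem abs_integral_gradInner_le (hβ : 0 ≤ β) (hu : u ∈ H10 Ω) (hv : v ∈ H10 Ω) :
    |∫ x in Ω, gradInner u v x| ≤ 2 * (√(uNormSq Ω β u) * √(uNormSq Ω β v)) := by
  refine (abs_integral_le_of_abs_le_mul zero_le_two (integrableOn_norm_fderiv_sq_of_mem_H10 hu)
    (integrableOn_norm_fderiv_sq_of_mem_H10 hv)
    (integrableOn_norm_fderiv_mul_norm_fderiv_of_mem_H10 hu hv)
    (abs_gradInner_le u v)).trans ?_
  gcongr <;> exact integral_norm_fderiv_sq_le_uNormSq hβ ‹_›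

theorem abs_mul_integral_inner_le (hβ : 0 ≤ β) (hu : u ∈ H10 Ω) (hv : v ∈ H10 Ω) :
    |β * ∫ x in Ω, ⟪u x, v x⟫| ≤ √(uNormSq Ω β u) * √(uNormSq Ω β v) := by
  have hcs : |∫ x in Ω, ⟪u x, v x⟫| ≤ √(∫ x in Ω, ‖u x‖ ^ 2) * √(∫ x in Ω, ‖v x‖ ^ 2) := by
    simpa using abs_integral_le_of_abs_le_mul zero_le_one (integrableOn_norm_sq_of_mem_H10 hu)
      (integrableOn_norm_sq_of_mem_H10 hv) (integrableOn_norm_mul_norm_of_mem_H10 hu hv)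
      (by simpa using fun x => abs_real_inner_le_norm (u x) (v x))
  calc |β * ∫ x in Ω, ⟪u x, v x⟫| = β * |∫ x in Ω, ⟪u x, v x⟫| := by
        rw [abs_mul, abs_of_nonneg hβ]
    _ ≤ β * (√(∫ x in Ω, ‖u x‖ ^ 2) * √(∫ x in Ω, ‖v x‖ ^ 2)) := by gcongr
    _ = √(β * ∫ x in Ω, ‖u x‖ ^ 2) * √(β * ∫ x in Ω, ‖v x‖ ^ 2) := by
        rw [Real.sqrt_mul hβ, Real.sqrt_mul hβ]
        linear_combination -(√(∫ x in Ω, ‖u x‖ ^ 2) * √(∫ x in Ω, ‖v x‖ ^ 2)) *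
          Real.mul_self_sqrt hβ
    _ ≤ √(uNormSq Ω β u) * √(uNormSq Ω β v) := by
        gcongr <;> exact mul_integral_norm_sq_le_uNormSq _

theorem abs_integral_mul_divg_le (hβ : 0 ≤ β) {p : E2 → ℝ}
    (hp : IntegrableOn (fun x => p x ^ 2) Ω) (hv : v ∈ H10 Ω) :
    |∫ x in Ω, p x * divg v x| ≤ √(pNormSq Ω β p) * √(uNormSq Ω β v) := by
  rw [← Real.sqrt_mul (pNormSq_nonneg hβ p)]
  exact Real.abs_le_sqrt (sq_integral_mul_divg_le_pNormSq_mul_uNormSq hβ hp hv)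

end TermBounds

/-- Boundedness of the generalized Stokes bilinear form: `|B(x, x̃)| ≤ C ‖x‖_X ‖x̃‖_X` for all
`x = (u,p)`, `x̃ = (ũ,p̃)` in `X = [H¹₀(Ω)]² × L²₀(Ω)`, with `C` independent of `β` (and `Ω`). -/
theorem stmt8 :
    ∃ C > (0 : ℝ), ∀ (Ω : Set E2), IsOpen Ω → Bornology.IsBounded Ω →
      ∀ β > (0 : ℝ), ∀ u v : E2 → E2, u ∈ H10 Ω → v ∈ H10 Ω →
      ∀ p q : E2 → ℝ,
        IntegrableOn (fun x => (p x) ^ 2) Ω → IntegrableOn (fun x => (q x) ^ 2) Ω →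
        (∫ x in Ω, p x) = 0 → (∫ x in Ω, q x) = 0 →
        |Bform Ω β u p v q| ≤
          C * Real.sqrt (uNormSq Ω β u + pNormSq Ω β p) *
            Real.sqrt (uNormSq Ω β v + pNormSq Ω β q) := by
  refine ⟨5, by norm_num, fun Ω _ _ β hβ u v hu hv p q hp hq _ _ => ?_⟩
  set a := √(uNormSq Ω β u + pNormSq Ω β p)
  set b := √(uNormSq Ω β v + pNormSq Ω β q)
  have hUu : √(uNormSq Ω β u) ≤ a :=
    Real.sqrt_le_sqrt (le_add_of_nonneg_right (pNormSq_nonneg hβ.le p))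
  have hUv : √(uNormSq Ω β v) ≤ b :=
    Real.sqrt_le_sqrt (le_add_of_nonneg_right (pNormSq_nonneg hβ.le q))
  have hPp : √(pNormSq Ω β p) ≤ a :=
    Real.sqrt_le_sqrt (le_add_of_nonneg_left (uNormSq_nonneg hβ.le u))
  have hPq : √(pNormSq Ω β q) ≤ b :=
    Real.sqrt_le_sqrt (le_add_of_nonneg_left (uNormSq_nonneg hβ.le v))
  have hdivu : |∫ x in Ω, divg u x * q x| ≤ √(pNormSq Ω β q) * √(uNormSq Ω β u) := by
    simpa only [mul_comm (divg u _)] using abs_integral_mul_divg_le hβ.le hq hu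
  calc |Bform Ω β u p v q|
      ≤ |∫ x in Ω, gradInner u v x| + |β * ∫ x in Ω, ⟪u x, v x⟫| +
          |∫ x in Ω, p x * divg v x| + |∫ x in Ω, divg u x * q x| :=
        (abs_add_le _ _).trans (add_le_add_left (abs_add_three _ _ _) _)
    _ ≤ 2 * (√(uNormSq Ω β u) * √(uNormSq Ω β v)) + √(uNormSq Ω β u) * √(uNormSq Ω β v) +
          √(pNormSq Ω β p) * √(uNormSq Ω β v) + √(pNormSq Ω β q) * √(uNormSq Ω β u) :=
        add_le_add (add_le_add (add_le_add (abs_integral_gradInner_le hβ.le hu hv)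
          (abs_mul_integral_inner_le hβ.le hu hv)) (abs_integral_mul_divg_le hβ.le hp hv)) hdivu
    _ ≤ 2 * (a * b) + a * b + a * b + b * a := by gcongr
    _ = 5 * a * b := by ring
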